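/- With T = 2 types and symmetric coefficient 0 ≤ α ≤ 1, if an allocation is produced by applying a (1+ε)-approximate makespan algorithm to all tasks ignoring types (SchedMixed), then its maximum cost is at most (2(1+ε)/(1+α))·OPT. -/
import Mathlib


open Finset

/-- Load of tasks of type `b` on machine `k` in allocation `P` (two types, as `Bool`). -/
noncomputable def tload {n m : ℕ} (p : Fin n → ℝ) (ty : Fin n → Bool)
    (P : Fin n → Fin m) (b : Bool) (k : Fin m) : ℝ :=
  ∑ i ∈ univ.filter (fun i => P i = k ∧ ty i = b), p i

/-- Maximum cost of a two-type MSE allocation with symmetric cross coefficient `α`. -/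
noncomputable def mse2 {n m : ℕ} (p : Fin n → ℝ) (ty : Fin n → Bool) (α : ℝ)
    (P : Fin n → Fin m) : ℝ :=
  ⨆ i, (tload p ty P (ty i) (P i) + α * tload p ty P (!(ty i)) (P i))

/-- Makespan (maximum total machine load, ignoring types) of allocation `P`. -/
noncomputable def makespan {n m : ℕ} (p : Fin n → ℝ) (P : Fin n → Fin m) : ℝ :=
  ⨆ k, ∑ i ∈ univ.filter (fun i => P i = k), p i

lemma tload_nonneg {n m : ℕ} (p : Fin n → ℝ) (hp : ∀ i, 0 ≤ p i) (ty : Fin n → Bool)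
    (P : Fin n → Fin m) (b : Bool) (k : Fin m) : 0 ≤ tload p ty P b k :=
  Finset.sum_nonneg fun i _ => hp i

lemma tload_add {n m : ℕ} (p : Fin n → ℝ) (ty : Fin n → Bool)
    (P : Fin n → Fin m) (b : Bool) (k : Fin m) :
    tload p ty P b k + tload p ty P (!b) k = ∑ i ∈ univ.filter (fun i => P i = k), p i := by
  unfold tload
  rw [← Finset.sum_filter_add_sum_filter_not (univ.filter fun i => P i = k) (fun i => ty i = b)]
  congr 1
  · rw [Finset.filter_filter]
  · rw [Finset.filter_filter]
    congr 1
    ext i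
    simp [Bool.eq_not_iff]

lemma mse2_le_makespan {n m : ℕ} (hn : 0 < n) (hm : 0 < m) (α : ℝ) (hα0 : 0 ≤ α) (hα1 : α ≤ 1)
    (p : Fin n → ℝ) (ty : Fin n → Bool) (hp : ∀ i, 0 ≤ p i) (P : Fin n → Fin m) :
    mse2 p ty α P ≤ makespan p P := by
  have : Nonempty (Fin n) := Fin.pos_iff_nonempty.mp hn
  have : Nonempty (Fin m) := Fin.pos_iff_nonempty.mp hm
  rw [mse2, makespan]
  refine ciSup_le fun i => ?_
  have h1 : tload p ty P (ty i) (P i) + α * tload p ty P (!(ty i)) (P i)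
      ≤ ∑ j ∈ univ.filter (fun j => P j = P i), p j := by
    rw [← tload_add p ty P (ty i) (P i)]
    nlinarith [tload_nonneg p hp ty P (!(ty i)) (P i)]
  refine h1.trans ?_
  exact le_ciSup (f := fun x : Fin m => ∑ j ∈ univ.filter (fun j => P j = x), p j) (Finite.bddAbove_range _) (P i)

lemma makespan_le_mse2 {n m : ℕ} (hn : 0 < n) (hm : 0 < m) (α : ℝ) (hα0 : 0 ≤ α) (hα1 : α ≤ 1)
    (p : Fin n → ℝ) (ty : Fin n → Bool) (hp : ∀ i, 0 < p i) (P : Fin n → Fin m) :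
    (1 + α) / 2 * makespan p P ≤ mse2 p ty α P := by
  have hne : Nonempty (Fin n) := Fin.pos_iff_nonempty.mp hn
  have : Nonempty (Fin m) := Fin.pos_iff_nonempty.mp hm
  have hmse0 : 0 ≤ mse2 p ty α P := by
    obtain ⟨i⟩ := hne
    have : (0:ℝ) ≤ tload p ty P (ty i) (P i) + α * tload p ty P (!(ty i)) (P i) := by
      nlinarith [tload_nonneg p (fun j => (hp j).le) ty P (ty i) (P i),
        tload_nonneg p (fun j => (hp j).le) ty P (!(ty i)) (P i)]
    rw [mse2]
    exact this.trans (le_ciSup (f := fun j : Fin n => tload p ty P (ty j) (P j) + α * tload p ty P (!(ty j)) (P j)) (Finite.bddAbove_range _) i)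
  -- makespan attained at some k
  obtain ⟨k, hk⟩ := Finite.exists_max (fun k : Fin m => ∑ i ∈ univ.filter (fun i => P i = k), p i)
  have hmk : makespan p P = ∑ i ∈ univ.filter (fun i => P i = k), p i := by
    rw [makespan]
    apply le_antisymm (ciSup_le hk)
    exact le_ciSup (f := fun x : Fin m => ∑ i ∈ univ.filter (fun i => P i = x), p i) (Finite.bddAbove_range _) k
  set C := ∑ i ∈ univ.filter (fun i => P i = k), p i with hC
  rcases le_or_gt C 0 with hC0 | hC0
  · rw [hmk]; nlinarith
  · -- pick type b with larger load
    obtain ⟨b, hb⟩ : ∃ b : Bool, C / 2 ≤ tload p ty P b k := by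
      by_contra h
      push_neg at h
      have h1 := h true
      have h2 := h false
      have := tload_add p ty P true k
      simp only [Bool.not_true] at this
      rw [hC] at *
      linarith [this]
    have hbpos : 0 < tload p ty P b k := lt_of_lt_of_le (by linarith) hb
    -- exists task i of type b on machine k
    have hne' : (univ.filter (fun i => P i = k ∧ ty i = b)).Nonempty := by
      by_contra h
      rw [Finset.not_nonempty_iff_eq_empty] at h
      have : tload p ty P b k = 0 := by rw [tload, h, Finset.sum_empty]
      linarith
    obtain ⟨i, hi⟩ := hne'
    simp only [Finset.mem_filter, Finset.mem_univ, true_and] at hi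
    have hcost : (1 + α) / 2 * C ≤ tload p ty P (ty i) (P i) + α * tload p ty P (!(ty i)) (P i) := by
      rw [hi.1, hi.2]
      have hsum := tload_add p ty P b k
      rw [← hC] at hsum
      nlinarith
    rw [hmk, mse2]
    exact hcost.trans (le_ciSup (f := fun j : Fin n => tload p ty P (ty j) (P j) + α * tload p ty P (!(ty j)) (P j)) (Finite.bddAbove_range _) i)

/-- SchedMixed. With two types and 0 ≤ α ≤ 1, an allocation produced
by a (1+ε)-approximate makespan algorithm applied to all tasks (ignoring types)
has maximum cost at most (2(1+ε)/(1+α))·OPT. -/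
theorem schedMixed_approx_compatible (n m : ℕ) (hn : 0 < n) (hm : 0 < m)
    (ε α OPT Cstar : ℝ) (hε : 0 ≤ ε) (hα0 : 0 ≤ α) (hα1 : α ≤ 1)
    (p : Fin n → ℝ) (ty : Fin n → Bool) (hp : ∀ i, 0 < p i)
    (σ : Fin n → Fin m)
    (hCs : IsLeast (Set.range (makespan p (m := m))) Cstar)
    (hσ : makespan p σ ≤ (1 + ε) * Cstar)
    (hOPT : IsLeast (Set.range (mse2 p ty α (m := m))) OPT) :
    mse2 p ty α σ ≤ (2 * (1 + ε) / (1 + α)) * OPT := by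
  have hne : Nonempty (Fin n) := Fin.pos_iff_nonempty.mp hn
  obtain ⟨Q, hQ⟩ := hOPT.1
  have h1 : mse2 p ty α σ ≤ (1 + ε) * Cstar :=
    (mse2_le_makespan hn hm α hα0 hα1 p ty (fun i => (hp i).le) σ).trans hσ
  have h2 : Cstar ≤ makespan p Q := hCs.2 ⟨Q, rfl⟩
  have h3 : (1 + α) / 2 * makespan p Q ≤ OPT := by
    rw [← hQ]
    exact makespan_le_mse2 hn hm α hα0 hα1 p ty hp Q
  have h4 : (1 + α) / 2 * Cstar ≤ OPT := by nlinarith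
  have hα : (0:ℝ) < 1 + α := by linarith
  refine h1.trans ?_
  rw [div_mul_eq_mul_div, le_div_iff₀ hα]
  nlinarith [mul_le_mul_of_nonneg_left h4 (by linarith : (0:ℝ) ≤ 1 + ε)]
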